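/- (Theorem 1, finite-state form.) Suppose Ψ(x₀, 0) > 1 - ε, and suppose that for every t < H and every x ∈ X the safety condition ∑_{x'} ((κ̂ t x) x').toReal · Ψ(x', t+1) ≥ Ψ(x, t) holds, where κ̂ is the absorbing closed-loop kernel of the deterministic online policy π̂. Then for every t ≤ H one has ∑_{x} ((ν t) x).toReal · Ψ(x, t) ≥ 1 - ε, where ν t is the time-t marginal of the online π̂-driven chain started at x₀. In particular, the probability under the switched policy (π̂ on times before t, π on times from t onward) that X_τ ∈ C for all t ≤ τ ≤ H is at least 1 - ε. -/

import Mathlib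

/-!
Along the online chain, `E t = ∑ x, ν t x * Ψ(x, t)` is nondecreasing in `t`: off `C` the safe
probability vanishes, and on `C` the absorbing kernel `κ̂` is the online kernel, so the safety
condition says that `Ψ(·, t)` is dominated by its one-step expectation. Hence
`E t ≥ E 0 = Ψ(x₀, 0) > 1 - ε`. By the Markov property of trajectories, the switched policy stays
in `C` from time `t` on with probability exactly `E t`.
-/

open scoped BigOperators

/-- Trajectory distribution of the time-dependent kernel `κ` started at state `x` at time `t`,
run for `n` further steps: a PMF on functions `Fin (n+1) → X` recording `X_t, ..., X_{t+n}`,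
with `X_t = x` and `X_{s+1} ~ κ s (X_s)` sampled via iterated `PMF.bind`. -/
noncomputable def traj {X : Type*} (κ : ℕ → X → PMF X) : ℕ → (n : ℕ) → X → PMF (Fin (n + 1) → X)
  | _, 0, x => PMF.pure fun _ => x
  | t, n + 1, x => (κ t x).bind fun x' => (traj κ (t + 1) n x').map (Fin.cons x)

/-- Safe probability `Ψ_κ(x, t)`: the probability, under the trajectory distribution of `κ`
started at `x` at time `t` over horizon `H`, that every state of the trajectory lies in the
safe set `C`. -/
noncomputable def safeProb {X : Type*} [Fintype X] [DecidableEq X]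
    (C : Set X) [DecidablePred (· ∈ C)] (κ : ℕ → X → PMF X) (H t : ℕ) (x : X) : ℝ :=
  ∑ f : Fin (H - t + 1) → X,
    if ∀ i : Fin (H - t + 1), f i ∈ C then ((traj κ t (H - t) x) f).toReal else 0

namespace PMF

variable {α β : Type*}

lemma toOuterMeasure_apply_ne_top (p : PMF α) (s : Set α) : p.toOuterMeasure s ≠ ⊤ :=
  p.toOuterMeasure_apply s ▸ p.tsum_coe_indicator_ne_top s

lemma toReal_toOuterMeasure_setOf [Fintype α] (p : PMF α) (q : α → Prop) [DecidablePred q] :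
    (p.toOuterMeasure {a | q a}).toReal = ∑ a, if q a then (p a).toReal else 0 := by
  rw [toOuterMeasure_apply_fintype, ENNReal.toReal_sum fun a _ =>
    ne_top_of_le_ne_top (p.apply_ne_top a) (Set.indicator_le_self _ _ a)]
  refine Finset.sum_congr rfl fun a _ => ?_
  by_cases h : q a <;> simp [h]

lemma toReal_bind_apply [Fintype α] (p : PMF α) (f : α → PMF β) (b : β) :
    ((p.bind f) b).toReal = ∑ a, (p a).toReal * (f a b).toReal := by
  rw [bind_apply, tsum_fintype, ENNReal.toReal_sum fun a _ =>
    ENNReal.mul_ne_top (p.apply_ne_top a) ((f a).apply_ne_top b)]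
  simp only [ENNReal.toReal_mul]

lemma toReal_toOuterMeasure_bind_apply [Fintype α] (p : PMF α) (f : α → PMF β) (s : Set β) :
    ((p.bind f).toOuterMeasure s).toReal
      = ∑ a, (p a).toReal * ((f a).toOuterMeasure s).toReal := by
  rw [toOuterMeasure_bind_apply, tsum_fintype, ENNReal.toReal_sum fun a _ =>
    ENNReal.mul_ne_top (p.apply_ne_top a) ((f a).toOuterMeasure_apply_ne_top s)]
  simp only [ENNReal.toReal_mul]

lemma sum_toReal_mul_le_sum_bind_toReal_mul [Fintype α] [Fintype β] (p : PMF α) (K : α → PMF β)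
    (v : α → ℝ) (w : β → ℝ) (h : ∀ a, v a ≤ ∑ b, (K a b).toReal * w b) :
    ∑ a, (p a).toReal * v a ≤ ∑ b, ((p.bind K) b).toReal * w b :=
  calc ∑ a, (p a).toReal * v a
      ≤ ∑ a, (p a).toReal * ∑ b, (K a b).toReal * w b :=
        Finset.sum_le_sum fun a _ => mul_le_mul_of_nonneg_left (h a) ENNReal.toReal_nonneg
    _ = ∑ b, ((p.bind K) b).toReal * w b := by
        simp only [toReal_bind_apply, Finset.mul_sum, Finset.sum_mul, mul_assoc]
        exact Finset.sum_comm

end PMF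

section Trajectories

variable {X : Type*}

/-- The law of `X_{a+t}` for the chain of `κ` started in state `x` at time `a`. -/
noncomputable def marginal (κ : ℕ → X → PMF X) : ℕ → ℕ → X → PMF X
  | _, 0, x => PMF.pure x
  | a, t + 1, x => (κ a x).bind (marginal κ (a + 1) t)

lemma marginal_succ' (κ : ℕ → X → PMF X) (a t : ℕ) (x : X) :
    marginal κ a (t + 1) x = (marginal κ a t x).bind (κ (a + t)) := by
  induction t generalizing a x with
  | zero => exact (PMF.bind_pure (κ a x)).trans (PMF.pure_bind x (κ a)).symm
  | succ t ih =>
      calc marginal κ a (t + 2) x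
          = (κ a x).bind fun x' => (marginal κ (a + 1) t x').bind (κ (a + 1 + t)) :=
            congrArg (PMF.bind (κ a x)) (funext fun x' => ih (a + 1) x')
        _ = (marginal κ a (t + 1) x).bind (κ (a + (t + 1))) := by
            rw [show a + (t + 1) = a + 1 + t by omega]
            exact (PMF.bind_bind _ _ _).symm

lemma marginal_congr {κ κ' : ℕ → X → PMF X} {a t : ℕ} (h : ∀ s, a ≤ s → s < a + t → κ s = κ' s)
    (x : X) : marginal κ a t x = marginal κ' a t x := by
  induction t generalizing a x with
  | zero => rfl
  | succ t ih =>
      show (κ a x).bind (marginal κ (a + 1) t) = (κ' a x).bind (marginal κ' (a + 1) t)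
      rw [h a le_rfl (by omega), funext (ih (a := a + 1) fun s hs hs' => h s (by omega) (by omega))]

lemma traj_congr {κ κ' : ℕ → X → PMF X} {a : ℕ} (h : ∀ s, a ≤ s → κ s = κ' s) (n : ℕ) (x : X) :
    traj κ a n x = traj κ' a n x := by
  induction n generalizing a x with
  | zero => rfl
  | succ n ih => simp only [traj, h a le_rfl, ih (a := a + 1) fun s hs => h s (by omega)]

lemma traj_map_eval_zero (κ : ℕ → X → PMF X) (a n : ℕ) (x : X) :
    (traj κ a n x).map (fun f => f 0) = PMF.pure x := by
  cases n with
  | zero => exact PMF.pure_map _ _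
  | succ n =>
      have head_cons : (fun f : Fin (n + 2) → X => f 0) ∘ Fin.cons x = Function.const _ x :=
        funext fun _ => Fin.cons_zero _ _
      simp only [traj, PMF.map_bind, PMF.map_comp, head_cons, PMF.map_const, PMF.bind_const]

def dropFirst (t : ℕ) {m : ℕ} (f : Fin (m + t + 1) → X) : Fin (m + 1) → X :=
  fun i => f ⟨i + t, by omega⟩

lemma dropFirst_cons (t : ℕ) {m : ℕ} (x : X) (f : Fin (m + t + 1) → X) :
    dropFirst (t + 1) (Fin.cons x f : Fin (m + (t + 1) + 1) → X) = dropFirst t f :=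
  funext fun i => Fin.cons_succ (α := fun _ => X) x f ⟨i + t, by omega⟩

lemma preimage_dropFirst_setOf_forall_mem (t m : ℕ) (C : Set X) :
    dropFirst t ⁻¹' {g : Fin (m + 1) → X | ∀ i, g i ∈ C}
      = {f | ∀ i : Fin (m + t + 1), t ≤ (i : ℕ) → f i ∈ C} := by
  ext f
  refine ⟨fun hf j hj => ?_, fun hf i => hf _ (Nat.le_add_left t i)⟩
  simpa [dropFirst, Nat.sub_add_cancel hj] using hf ⟨j - t, by omega⟩

/-- Markov property of `traj` at time `a + t`. -/
lemma traj_map_dropFirst (κ : ℕ → X → PMF X) (a m t : ℕ) (x : X) :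
    (traj κ a (m + t) x).map (dropFirst t) = (marginal κ a t x).bind (traj κ (a + t) m) := by
  induction t generalizing a x with
  | zero => exact (PMF.map_id _).trans (PMF.pure_bind x _).symm
  | succ t ih =>
      have drop_cons : dropFirst (t + 1) ∘ Fin.cons x = dropFirst (m := m) t :=
        funext (dropFirst_cons t x)
      simp only [traj, marginal, PMF.map_bind, PMF.map_comp, PMF.bind_bind, drop_cons]
      refine congrArg _ (funext fun x' => ?_)
      rw [show a + (t + 1) = a + 1 + t by omega]
      exact ih (a + 1) x'

end Trajectories

section Safety

variable {X : Type*} [Fintype X] [DecidableEq X] {C : Set X} [DecidablePred (· ∈ C)]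

lemma safeProb_eq_toReal_toOuterMeasure (κ : ℕ → X → PMF X) (H t : ℕ) (x : X) :
    safeProb C κ H t x = ((traj κ t (H - t) x).toOuterMeasure {f | ∀ i, f i ∈ C}).toReal :=
  (PMF.toReal_toOuterMeasure_setOf _ _).symm

lemma safeProb_nonneg (κ : ℕ → X → PMF X) (H t : ℕ) (x : X) : 0 ≤ safeProb C κ H t x := by
  rw [safeProb_eq_toReal_toOuterMeasure]
  exact ENNReal.toReal_nonneg

lemma safeProb_eq_zero_of_notMem (κ : ℕ → X → PMF X) (H t : ℕ) {x : X} (hx : x ∉ C) :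
    safeProb C κ H t x = 0 := by
  rw [safeProb_eq_toReal_toOuterMeasure, ENNReal.toReal_eq_zero_iff]
  left
  refine nonpos_iff_eq_zero.1 ?_
  calc (traj κ t (H - t) x).toOuterMeasure {f | ∀ i, f i ∈ C}
      ≤ (traj κ t (H - t) x).toOuterMeasure ((fun f => f 0) ⁻¹' C) :=
        MeasureTheory.measure_mono fun f hf => hf 0
    _ = 0 := by
        rw [← PMF.toOuterMeasure_map_apply, traj_map_eval_zero, PMF.toOuterMeasure_pure_apply,
          if_neg hx]

lemma sum_safe_from_switched_traj_eq (K κ : ℕ → X → PMF X) {t H : ℕ} (ht : t ≤ H) (x : X) :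
    ∑ f : Fin (H + 1) → X,
        (if ∀ i : Fin (H + 1), t ≤ (i : ℕ) → f i ∈ C then
          ((traj (fun s x => if s < t then K s x else κ s x) 0 H x) f).toReal else 0)
      = ∑ y, ((marginal K 0 t x) y).toReal * safeProb C κ H t y := by
  obtain ⟨m, rfl⟩ : ∃ m, H = m + t := ⟨H - t, by omega⟩
  set κ_switch : ℕ → X → PMF X := fun s y => if s < t then K s y else κ s y
  have before_t : marginal κ_switch 0 t x = marginal K 0 t x :=
    marginal_congr (fun s _ hs => funext fun y => if_pos (by omega : s < t)) x
  have after_t : traj κ_switch t m = traj κ t m :=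
    funext (traj_congr (fun s hs => funext fun y => if_neg (not_lt.2 (by omega : t ≤ s))) m)
  rw [← PMF.toReal_toOuterMeasure_setOf, ← preimage_dropFirst_setOf_forall_mem,
    ← PMF.toOuterMeasure_map_apply, traj_map_dropFirst, PMF.toReal_toOuterMeasure_bind_apply,
    zero_add, before_t, after_t]
  simp only [safeProb_eq_toReal_toOuterMeasure]
  rw [Nat.add_sub_cancel]

end Safety

theorem finite_state_safety_certificate_general
    {X : Type*} [Fintype X] [DecidableEq X]
    {U : Type*}
    (C : Set X) [DecidablePred (· ∈ C)] (H : ℕ)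
    (P : X → U → PMF X) (ε : ℝ) (x₀ : X)
    (πhat : ℕ → X → U)
    -- closed-loop kernel of the stochastic policy π
    (κπ : ℕ → X → PMF X)
    -- time-t marginals of the online π̂-driven chain started at x₀
    (ν : ℕ → PMF X) (hν0 : ν 0 = PMF.pure x₀)
    (hν : ∀ s, ν (s + 1) = (ν s).bind fun x => P x (πhat s x))
    -- absorbing closed-loop kernel of the deterministic online policy π̂
    (κhat : ℕ → X → PMF X)
    (hκhat : ∀ s x, κhat s x = if x ∈ C then P x (πhat s x) else PMF.pure x)
    -- initial condition: Ψ(x₀, 0) > 1 - ε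
    (hinit : 1 - ε < safeProb C κπ H 0 x₀)
    -- safety condition at every time and state
    (hsafe : ∀ t, t < H → ∀ x : X,
      safeProb C κπ H t x ≤ ∑ x' : X, ((κhat t x) x').toReal * safeProb C κπ H (t + 1) x') :
    (∀ t, t ≤ H → 1 - ε ≤ ∑ x : X, ((ν t) x).toReal * safeProb C κπ H t x)
    ∧ (∀ t, t ≤ H →
        1 - ε ≤ ∑ f : Fin (H + 1) → X,
          if ∀ i : Fin (H + 1), t ≤ (i : ℕ) → f i ∈ C then
            ((traj (fun s x => if s < t then P x (πhat s x) else κπ s x) 0 H x₀) f).toReal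
          else 0) := by
  have hν_marginal : ∀ s, ν s = marginal (fun s x => P x (πhat s x)) 0 s x₀ := by
    intro s
    induction s with
    | zero => exact hν0
    | succ s ih => rw [hν, ih, marginal_succ', zero_add]
  have expected_safe_mono : ∀ t < H, ∑ x, (ν t x).toReal * safeProb C κπ H t x
      ≤ ∑ x, (ν (t + 1) x).toReal * safeProb C κπ H (t + 1) x := by
    intro t ht
    rw [hν]
    refine PMF.sum_toReal_mul_le_sum_bind_toReal_mul _ _ _ _ fun x => ?_
    by_cases hx : x ∈ C
    · simpa only [hκhat, hx, if_true] using hsafe t ht x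
    · rw [safeProb_eq_zero_of_notMem κπ H t hx]
      exact Finset.sum_nonneg fun _ _ =>
        mul_nonneg ENNReal.toReal_nonneg (safeProb_nonneg κπ H (t + 1) _)
  have expected_safe : ∀ t ≤ H, 1 - ε ≤ ∑ x, (ν t x).toReal * safeProb C κπ H t x := by
    intro t
    induction t with
    | zero =>
        intro _
        rw [hν0, Fintype.sum_eq_single x₀ fun x hx => by simp [PMF.pure_apply, hx]]
        simpa using hinit.le
    | succ t ih => intro ht; exact (ih (by omega)).trans (expected_safe_mono t ht)
  refine ⟨expected_safe, fun t ht => (expected_safe t ht).trans_eq ?_⟩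
  rw [hν_marginal]
  exact (sum_safe_from_switched_traj_eq _ κπ ht x₀).symm

/-- **Theorem 1 (finite-state form).** If the initial long-term safe probability exceeds
`1 - ε` and every executed action of the deterministic online policy `π̂` satisfies the
Q-style invariance condition through the absorbing closed-loop kernel `κ̂`, then the expected
safe probability `∑ x, ν t x · Ψ(x, t)` stays at least `1 - ε` at all times `t ≤ H`; in
particular, the probability under the switched policy (`π̂` before time `t`, `π` from time `t`
on) that the state is safe at all times `τ` with `t ≤ τ ≤ H` is at least `1 - ε`. -/
theorem finite_state_safety_certificate
    {X : Type*} [Fintype X] [Nonempty X] [DecidableEq X]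
    {U : Type*} [Fintype U] [Nonempty U]
    (C : Set X) [DecidablePred (· ∈ C)] (H : ℕ)
    (P : X → U → PMF X) (ε : ℝ) (x₀ : X)
    (π : ℕ → X → PMF U) (πhat : ℕ → X → U)
    -- closed-loop kernel of the stochastic policy π
    (κπ : ℕ → X → PMF X) (hκπ : ∀ s x, κπ s x = (π s x).bind fun u => P x u)
    -- time-t marginals of the online π̂-driven chain started at x₀
    (ν : ℕ → PMF X) (hν0 : ν 0 = PMF.pure x₀)
    (hν : ∀ s, ν (s + 1) = (ν s).bind fun x => P x (πhat s x))
    -- absorbing closed-loop kernel of the deterministic online policy π̂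
    (κhat : ℕ → X → PMF X)
    (hκhat : ∀ s x, κhat s x = if x ∈ C then P x (πhat s x) else PMF.pure x)
    -- initial condition: Ψ(x₀, 0) > 1 - ε
    (hinit : 1 - ε < safeProb C κπ H 0 x₀)
    -- safety condition at every time and state
    (hsafe : ∀ t, t < H → ∀ x : X,
      safeProb C κπ H t x ≤ ∑ x' : X, ((κhat t x) x').toReal * safeProb C κπ H (t + 1) x') :
    (∀ t, t ≤ H → 1 - ε ≤ ∑ x : X, ((ν t) x).toReal * safeProb C κπ H t x)
    ∧ (∀ t, t ≤ H →
        1 - ε ≤ ∑ f : Fin (H + 1) → X,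
          if ∀ i : Fin (H + 1), t ≤ (i : ℕ) → f i ∈ C then
            ((traj (fun s x => if s < t then P x (πhat s x) else κπ s x) 0 H x₀) f).toReal
          else 0) :=
  finite_state_safety_certificate_general C H P ε x₀ πhat κπ ν hν0 hν κhat hκhat hinit hsafe
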